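/- arXiv:1305.0867 — 4 statements merged into one kernel-verified Lean document; each statement's English description precedes it below -/
import Mathlib

section
/- Let n ≥ 2, let 0 ≤ j ≤ n-2, let m be a positive integer, and let z_0 ≠ 0 be a periodic point of minimal period m of the map p_0(z) = z^n. For t ∈ ℂ set p_t(z) = z^n + t·z^j. Suppose w is an analytic function on a neighborhood V of 0 in ℂ with w(0) = z_0 and p_t^{∘m}(w(t)) = w(t) for all t ∈ V, and define λ(t) = (p_t^{∘m})'(w(t)). Then λ'(0) = (j·n^{m-1} - n^m) · Σ_{i=0}^{m-1} (z_0^{-1})^{n^i(n-j)}. -/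
/-!
Write `y i t = p_t^[i] (w t)`, so that `y i 0 = z₀ ^ n ^ i` and the multiplier is
`λ t = ∏_{i<m} p_t'(y i t)`. Since `λ 0 = n ^ m ≠ 0`, its derivative is `λ 0` times its
logarithmic derivative, which is the sum over the orbit of
`(n - 1) e_i + (j / n) a_i` with `e_i = y_i'(0) / z₀ ^ n ^ i` and `a_i = (z₀⁻¹) ^ (n ^ i (n - j))`.
Differentiating `y (i + 1) t = y i t ^ n + t y i t ^ j` gives `e_{i+1} = n e_i + a_i`, and
periodicity gives `e_m = e_0`; summing the recurrence yields `(n - 1) ∑ e_i = -∑ a_i`.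
-/

open Finset Filter Topology

theorem hasDerivAt_iterate_prod {𝕜 : Type*} [NontriviallyNormedField 𝕜] {f f' : 𝕜 → 𝕜}
    (hf : ∀ z, HasDerivAt f (f' z) z) (k : ℕ) (z : 𝕜) :
    HasDerivAt f^[k] (∏ i ∈ range k, f' (f^[i] z)) z := by
  induction k with
  | zero => simpa using hasDerivAt_id z
  | succ k ih =>
    rw [Function.iterate_succ', prod_range_succ, mul_comm]
    exact (hf _).comp z ih

theorem mul_sum_range_eq_neg_of_recurrence {R : Type*} [CommRing R] {r : R} {e a : ℕ → R}
    (hrec : ∀ i, e (i + 1) = r * e i + a i) {m : ℕ} (hper : e m = e 0) :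
    (r - 1) * ∑ i ∈ range m, e i = -∑ i ∈ range m, a i := by
  calc (r - 1) * ∑ i ∈ range m, e i = ∑ i ∈ range m, (e (i + 1) - e i) - ∑ i ∈ range m, a i := by
        rw [mul_sum, ← sum_sub_distrib]
        exact sum_congr rfl fun i _ => by rw [hrec]; ring
    _ = -∑ i ∈ range m, a i := by rw [sum_range_sub, hper, sub_self, zero_sub]

theorem deriv_eq_mul_logDeriv {𝕜 : Type*} [NontriviallyNormedField 𝕜] {f : 𝕜 → 𝕜} {x : 𝕜}
    (hf : f x ≠ 0) : deriv f x = f x * logDeriv f x := by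
  rw [logDeriv_apply, mul_div_cancel₀ _ hf]

section PerturbedPow

variable {𝕜 : Type*} [NontriviallyNormedField 𝕜] (n j : ℕ)

def perturbedPow (t z : 𝕜) : 𝕜 := z ^ n + t * z ^ j

def perturbedPowDeriv (t z : 𝕜) : 𝕜 := n * z ^ (n - 1) + t * (j * z ^ (j - 1))

@[simp]
theorem perturbedPowDeriv_zero (z : 𝕜) : perturbedPowDeriv n j 0 z = n * z ^ (n - 1) := by
  simp [perturbedPowDeriv]

theorem hasDerivAt_perturbedPow (t z : 𝕜) :
    HasDerivAt (perturbedPow n j t) (perturbedPowDeriv n j t z) z :=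
  (hasDerivAt_pow n z).add ((hasDerivAt_pow j z).const_mul t)

theorem deriv_iterate_perturbedPow (t z : 𝕜) (k : ℕ) :
    deriv (perturbedPow n j t)^[k] z =
      ∏ i ∈ range k, perturbedPowDeriv n j t ((perturbedPow n j t)^[i] z) :=
  (hasDerivAt_iterate_prod (hasDerivAt_perturbedPow n j t) k z).deriv

theorem iterate_perturbedPow_zero (i : ℕ) : (perturbedPow n j (0 : 𝕜))^[i] = (· ^ n ^ i) := by
  have : perturbedPow n j (0 : 𝕜) = (· ^ n) := by ext z; simp [perturbedPow]
  rw [this, pow_iterate]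

variable {n j}

theorem deriv_iterate_perturbedPow_zero {m : ℕ} (hn : n ≠ 0) {z₀ : 𝕜} (hz₀ : z₀ ≠ 0)
    (hz : z₀ ^ n ^ m = z₀) : deriv (perturbedPow n j 0)^[m] z₀ = n ^ m := by
  have hpos : 1 ≤ n ^ m := Nat.one_le_pow _ _ (Nat.pos_of_ne_zero hn)
  rw [iterate_perturbedPow_zero, (hasDerivAt_pow _ _).deriv, pow_sub₀ _ hz₀ hpos, hz, pow_one,
    mul_inv_cancel₀ hz₀]
  push_cast
  ring

theorem hasDerivAt_perturbedPowDeriv_comp {y : 𝕜 → 𝕜} {y' : 𝕜} (hy : HasDerivAt y y' 0) :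
    HasDerivAt (fun t => perturbedPowDeriv n j t (y t))
      (n * ((n - 1 : ℕ) * y 0 ^ (n - 1 - 1) * y') + j * y 0 ^ (j - 1)) 0 := by
  have h := ((hy.fun_pow (n - 1)).const_mul (n : 𝕜)).fun_add
    ((hasDerivAt_id' (0 : 𝕜)).fun_mul ((hy.fun_pow (j - 1)).const_mul (j : 𝕜)))
  simpa [perturbedPowDeriv] using h

theorem logDeriv_perturbedPowDeriv_comp [CharZero 𝕜] (hn : 2 ≤ n) {y : 𝕜 → 𝕜} {y' : 𝕜}
    (hy : HasDerivAt y y' 0) (hy0 : y 0 ≠ 0) :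
    logDeriv (fun t => perturbedPowDeriv n j t (y t)) 0 =
      (n - 1) * (y' / y 0) + j / n * (y 0 ^ j / y 0 ^ n) := by
  rw [logDeriv_apply, (hasDerivAt_perturbedPowDeriv_comp hy).deriv, perturbedPowDeriv_zero]
  obtain ⟨k, rfl⟩ := Nat.exists_eq_add_of_le' hn
  have hk : (k : 𝕜) + 2 ≠ 0 := by exact_mod_cast (k + 1).succ_ne_zero
  rcases j with _ | j
  · simp only [Nat.cast_add, Nat.cast_ofNat, Nat.add_one_sub_one, Nat.cast_one, add_tsub_cancel_right,
      CharP.cast_eq_zero, zero_mul, add_zero, zero_div]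
    field_simp
    ring
  · simp only [Nat.cast_add, Nat.cast_ofNat, Nat.add_one_sub_one, Nat.cast_one, add_tsub_cancel_right]
    field_simp
    ring

theorem pow_div_pow_pow_eq_inv_pow {z₀ : 𝕜} (hz₀ : z₀ ≠ 0) (hj : j ≤ n) (i : ℕ) :
    (z₀ ^ n ^ i) ^ j / (z₀ ^ n ^ i) ^ n = z₀⁻¹ ^ (n ^ i * (n - j)) := by
  rw [pow_mul, inv_pow, inv_pow_sub₀ (pow_ne_zero _ hz₀) hj, div_eq_inv_mul]

theorem mul_sum_div_orbit_eq_neg {z₀ : 𝕜} (hz₀ : z₀ ≠ 0) {m : ℕ} (hz : z₀ ^ n ^ m = z₀)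
    {d : ℕ → 𝕜} (hd : ∀ i, d (i + 1) = n * (z₀ ^ n ^ i) ^ (n - 1) * d i + (z₀ ^ n ^ i) ^ j)
    (hdm : d m = d 0) :
    ((n : 𝕜) - 1) * ∑ i ∈ range m, d i / z₀ ^ n ^ i =
      -∑ i ∈ range m, (z₀ ^ n ^ i) ^ j / (z₀ ^ n ^ i) ^ n := by
  refine mul_sum_range_eq_neg_of_recurrence (fun i => ?_) (by rw [hdm, hz, pow_zero, pow_one])
  have hc : z₀ ^ n ^ i ≠ 0 := pow_ne_zero _ hz₀
  rw [pow_succ, pow_mul, hd]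
  rcases n with _ | n
  · simp
  · rw [Nat.add_sub_cancel]
    field_simp
    ring

variable {w : 𝕜 → 𝕜}

theorem differentiableAt_iterate_perturbedPow {t : 𝕜} (hw : DifferentiableAt 𝕜 w t) (i : ℕ) :
    DifferentiableAt 𝕜 (fun t => (perturbedPow n j t)^[i] (w t)) t := by
  induction i with
  | zero => simpa using hw
  | succ i ih =>
    simp_rw [Function.iterate_succ_apply', perturbedPow]
    exact (ih.pow n).add (differentiableAt_id.mul (ih.pow j))

theorem deriv_iterate_perturbedPow_succ (hw : DifferentiableAt 𝕜 w 0) (i : ℕ) :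
    deriv (fun t => (perturbedPow n j t)^[i + 1] (w t)) 0 =
      n * (w 0 ^ n ^ i) ^ (n - 1) * deriv (fun t => (perturbedPow n j t)^[i] (w t)) 0
        + (w 0 ^ n ^ i) ^ j := by
  have h := (differentiableAt_iterate_perturbedPow (n := n) (j := j) hw i).hasDerivAt
  have h' := (h.fun_pow n).fun_add ((hasDerivAt_id' (0 : 𝕜)).fun_mul (h.fun_pow j))
  simp_rw [Function.iterate_succ_apply', perturbedPow]
  rw [h'.deriv]
  simp [iterate_perturbedPow_zero]

theorem deriv_multiplier_perturbedPow [CharZero 𝕜] (hn : 2 ≤ n) (hj : j ≤ n) {m : ℕ} (hm : 0 < m)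
    {z₀ : 𝕜} (hz₀ : z₀ ≠ 0) (hz : z₀ ^ n ^ m = z₀) (hw : DifferentiableAt 𝕜 w 0) (hw0 : w 0 = z₀)
    (hper : (fun t => (perturbedPow n j t)^[m] (w t)) =ᶠ[𝓝 0] w) :
    deriv (fun t => deriv (perturbedPow n j t)^[m] (w t)) 0 =
      (j * n ^ (m - 1) - n ^ m) * ∑ i ∈ range m, z₀⁻¹ ^ (n ^ i * (n - j)) := by
  set y : ℕ → 𝕜 → 𝕜 := fun i t => (perturbedPow n j t)^[i] (w t)
  have hyne (i : ℕ) : y i 0 ≠ 0 := by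
    simpa [y, iterate_perturbedPow_zero, hw0] using pow_ne_zero (n ^ i) hz₀
  have hyd (i : ℕ) := (differentiableAt_iterate_perturbedPow (n := n) (j := j) hw i).hasDerivAt
  have horbit := mul_sum_div_orbit_eq_neg hz₀ hz (d := fun i => deriv (y i) 0)
    (fun i => by rw [← hw0]; exact deriv_iterate_perturbedPow_succ hw i)
    (show y m =ᶠ[𝓝 0] y 0 from hper).deriv_eq
  have hmult : (fun t => deriv (perturbedPow n j t)^[m] (w t)) =
      fun t => ∏ i ∈ range m, perturbedPowDeriv n j t (y i t) :=
    funext fun t => deriv_iterate_perturbedPow n j t (w t) m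
  have hmult0 : ∏ i ∈ range m, perturbedPowDeriv n j 0 (y i 0) = (n : 𝕜) ^ m := by
    rw [← congr_fun hmult 0, hw0, deriv_iterate_perturbedPow_zero (by omega) hz₀ hz]
  have hn0 : (n : 𝕜) ≠ 0 := by exact_mod_cast (by omega : n ≠ 0)
  rw [hmult, deriv_eq_mul_logDeriv (hmult0 ▸ pow_ne_zero m hn0), hmult0,
    logDeriv_prod (fun i _ => by simpa using mul_ne_zero hn0 (pow_ne_zero _ (hyne i)))
      (fun i _ => (hasDerivAt_perturbedPowDeriv_comp (hyd i)).differentiableAt)]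
  simp_rw [logDeriv_perturbedPowDeriv_comp hn (hyd _) (hyne _)]
  rw [sum_add_distrib, ← mul_sum, ← mul_sum]
  simp only [y, iterate_perturbedPow_zero, hw0, pow_div_pow_pow_eq_inv_pow hz₀ hj] at horbit ⊢
  have hjn : (n : 𝕜) ^ m * (j / n) = j * n ^ (m - 1) := by
    rw [← Nat.sub_add_cancel hm, pow_succ, Nat.add_sub_cancel]
    field_simp
  linear_combination (n : 𝕜) ^ m * horbit + (∑ i ∈ range m, z₀⁻¹ ^ (n ^ i * (n - j))) * hjn

end PerturbedPow

/-- derivative of the multiplier `λ(t) = (p_t^{∘m})'(w(t))` of the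
analytically continued periodic point `w(t)` of `p_t(z) = zⁿ + t z^j` at `t = 0`:
`λ'(0) = (j n^{m-1} - n^m) Σ_{i<m} (z₀⁻¹)^{nⁱ(n-j)}`. -/
theorem multiplier_derivative
    (n : ℕ) (hn : 2 ≤ n) (j : ℕ) (hj : j ≤ n - 2) (m : ℕ) (hm : 0 < m)
    (z₀ : ℂ) (hz₀ : z₀ ≠ 0)
    (hminper : Function.minimalPeriod (fun z : ℂ => z ^ n) z₀ = m)
    (V : Set ℂ) (hV : IsOpen V) (h0V : (0 : ℂ) ∈ V)
    (w : ℂ → ℂ) (hw : ∀ t ∈ V, AnalyticAt ℂ w t) (hw0 : w 0 = z₀)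
    (hper : ∀ t ∈ V, (fun z : ℂ => z ^ n + t * z ^ j)^[m] (w t) = w t) :
    deriv (fun t => deriv ((fun z : ℂ => z ^ n + t * z ^ j)^[m]) (w t)) 0 =
      ((j : ℂ) * (n : ℂ) ^ (m - 1) - (n : ℂ) ^ m) *
        ∑ i ∈ Finset.range m, (z₀⁻¹) ^ (n ^ i * (n - j)) := by
  have hz : z₀ ^ n ^ m = z₀ := by
    simpa [hminper, pow_iterate] using
      Function.iterate_minimalPeriod (f := fun z : ℂ => z ^ n) (x := z₀)
  exact deriv_multiplier_perturbedPow hn (by omega) hm hz₀ hz (hw 0 h0V).differentiableAt hw0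
    (eventually_of_mem (hV.mem_nhds h0V) hper)
end

section
/- Let q be a polynomial of degree n ≥ 2, let m be a positive integer and let 0 ≤ j be an integer. Let w_0, w_1, …, w_{m-1} ∈ ℂ be a periodic orbit of q of period m (so w_{i+1} = q(w_i) with indices taken mod m, and the points w_0, …, w_{m-1} are distinct), and assume the multiplier Π_{s=0}^{m-1} q'(w_s) ≠ 1. For t ∈ ℂ set p_t(z) = q(z) + t·z^j. Suppose w_0(t), …, w_{m-1}(t) are functions analytic on a neighborhood of 0 in ℂ, differentiable at 0, with w_i(0) = w_i and w_{i+1}(t) = p_t(w_i(t)) for all t (indices mod m). Then for every i, (d/dt)w_i(t)|_{t=0} = [ Σ_{s=0}^{m-1} w_{i+s}^j · Π_{r=s+1}^{m-1} q'(w_{i+r}) ] / [ 1 - Π_{s=0}^{m-1} q'(w_{i+s}) ], where all orbit indices are taken modulo m. -/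
/-!
Differentiating `w_{k+1}(t) = q(w_k(t)) + t·w_k(t)^j` at `t = 0` gives the affine recurrence
`w_{k+1}'(0) = q'(w_k)·w_k'(0) + w_k^j`. Iterating it once around the orbit and using
`w_{i+m} = w_i` yields `w_i'(0) = P·w_i'(0) + S`, with `P` the multiplier and `S` the numerator
sum, so `P ≠ 1` determines `w_i'(0) = S / (1 - P)`.
-/

open Finset Polynomial

theorem Function.Periodic.prod_range_add_left {M : Type*} [CommMonoid M] {f : ℕ → M} {m : ℕ}
    (hf : Function.Periodic f m) (i : ℕ) :
    ∏ s ∈ range m, f (i + s) = ∏ s ∈ range m, f s := by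
  induction i with
  | zero => simp
  | succ i ih =>
    rw [← ih]
    cases m with
    | zero => simp
    | succ m =>
      rw [prod_range_succ, prod_range_succ', show i + 1 + m = i + (m + 1) by omega,
        hf i, add_zero]
      simp only [add_right_comm i 1, add_assoc i]

theorem eq_prod_mul_add_sum_of_forall_succ_eq {R : Type*} [CommSemiring R] {d a b : ℕ → R}
    (h : ∀ k, d (k + 1) = a k * d k + b k) (k : ℕ) :
    d k = (∏ s ∈ range k, a s) * d 0 + ∑ s ∈ range k, b s * ∏ r ∈ Ico (s + 1) k, a r := by
  induction k with
  | zero => simp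
  | succ k ih =>
    have extend : ∀ s ∈ range k,
        b s * ∏ r ∈ Ico (s + 1) (k + 1), a r = (b s * ∏ r ∈ Ico (s + 1) k, a r) * a k := by
      intro s hs
      rw [prod_Ico_succ_top (by simp only [mem_range] at hs; omega), mul_assoc]
    rw [h, ih, prod_range_succ, sum_range_succ, sum_congr rfl extend, ← sum_mul]
    simp only [Ico_self, prod_empty, mul_one]
    ring

theorem HasDerivAt.eval_add_mul_pow_at_zero {𝕜 : Type*} [NontriviallyNormedField 𝕜]
    {f : 𝕜 → 𝕜} {f' : 𝕜} (q : 𝕜[X]) (j : ℕ) (hf : HasDerivAt f f' 0) :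
    HasDerivAt (fun t => q.eval (f t) + t * f t ^ j) (q.derivative.eval (f 0) * f' + f 0 ^ j) 0 := by
  have h := ((q.hasDerivAt (f 0)).comp 0 hf).add ((hasDerivAt_id 0).mul (hf.pow j))
  exact h.congr_deriv (by simp)

theorem periodic_orbit_derivative_general
    (q : Polynomial ℂ)
    (m : ℕ) (j : ℕ)
    (w : ℕ → ℂ)
    (hwper : ∀ i, w (i + m) = w i)
    (hmult : ∏ s ∈ Finset.range m, q.derivative.eval (w s) ≠ 1)
    (V : Set ℂ) (hV : IsOpen V) (h0V : (0 : ℂ) ∈ V)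
    (W : ℕ → ℂ → ℂ)
    (hWdiff : ∀ i, DifferentiableAt ℂ (W i) 0)
    (hW0 : ∀ i, W i 0 = w i)
    (hWper : ∀ i, ∀ t ∈ V, W (i + m) t = W i t)
    (hWstep : ∀ i, ∀ t ∈ V, W (i + 1) t = q.eval (W i t) + t * (W i t) ^ j) :
    ∀ i, deriv (W i) 0 =
      (∑ s ∈ Finset.range m, (w (i + s)) ^ j *
          ∏ r ∈ Finset.Ico (s + 1) m, q.derivative.eval (w (i + r))) /
        (1 - ∏ s ∈ Finset.range m, q.derivative.eval (w (i + s))) := by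
  intro i
  have hV0 : V ∈ nhds (0 : ℂ) := hV.mem_nhds h0V
  have hrec : ∀ k, deriv (W (i + (k + 1))) 0 =
      q.derivative.eval (w (i + k)) * deriv (W (i + k)) 0 + w (i + k) ^ j := by
    intro k
    rw [← add_assoc, ← hW0, ((hWdiff _).hasDerivAt.eval_add_mul_pow_at_zero q j).deriv.symm]
    exact Filter.EventuallyEq.deriv_eq (Filter.mem_of_superset hV0 (hWstep _))
  have hper : deriv (W (i + m)) 0 = deriv (W i) 0 :=
    Filter.EventuallyEq.deriv_eq (Filter.mem_of_superset hV0 (hWper i))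
  have hloop := eq_prod_mul_add_sum_of_forall_succ_eq (d := fun k => deriv (W (i + k)) 0) hrec m
  simp only [hper, add_zero] at hloop
  have hP : ∏ s ∈ range m, q.derivative.eval (w (i + s)) ≠ 1 := by
    have hq'w : Function.Periodic (fun k => q.derivative.eval (w k)) m := fun k => by
      simp only [hwper]
    rwa [hq'w.prod_range_add_left i]
  rw [eq_div_iff (sub_ne_zero.mpr hP.symm)]
  linear_combination hloop

/-- derivative at `t = 0` of the points of a non-multiple periodic
orbit of `q` analytically continued through the family `p_t(z) = q(z) + t z^j`:
`wᵢ'(0) = [Σ_{s<m} w_{i+s}^j Π_{r=s+1}^{m-1} q'(w_{i+r})] / [1 - Π_{s<m} q'(w_{i+s})]`,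
orbit indices mod `m` being encoded by `m`-periodicity of `i ↦ wᵢ`. -/
theorem periodic_orbit_derivative (n : ℕ) (hn : 2 ≤ n)
    (q : Polynomial ℂ) (hq : q.natDegree = n)
    (m : ℕ) (hm : 0 < m) (j : ℕ)
    (w : ℕ → ℂ)
    (hwper : ∀ i, w (i + m) = w i)
    (hwstep : ∀ i, w (i + 1) = q.eval (w i))
    (hwdist : ∀ i i', i < m → i' < m → w i = w i' → i = i')
    (hmult : ∏ s ∈ Finset.range m, q.derivative.eval (w s) ≠ 1)
    (V : Set ℂ) (hV : IsOpen V) (h0V : (0 : ℂ) ∈ V)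
    (W : ℕ → ℂ → ℂ)
    (hWanal : ∀ i, ∀ t ∈ V, AnalyticAt ℂ (W i) t)
    (hWdiff : ∀ i, DifferentiableAt ℂ (W i) 0)
    (hW0 : ∀ i, W i 0 = w i)
    (hWper : ∀ i, ∀ t ∈ V, W (i + m) t = W i t)
    (hWstep : ∀ i, ∀ t ∈ V, W (i + 1) t = q.eval (W i t) + t * (W i t) ^ j) :
    ∀ i, deriv (W i) 0 =
      (∑ s ∈ Finset.range m, (w (i + s)) ^ j *
          ∏ r ∈ Finset.Ico (s + 1) m, q.derivative.eval (w (i + r))) /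
        (1 - ∏ s ∈ Finset.range m, q.derivative.eval (w (i + s))) :=
  periodic_orbit_derivative_general q m j w hwper hmult V hV h0V W hWdiff hW0 hWper hWstep
end

section
/- Let n ≥ 2, let 0 ≤ j ≤ n-2, let m be a positive integer, and let z_0 ≠ 0 be a periodic point of minimal period m of p_0(z) = z^n; set w_i = z_0^{n^i} for 0 ≤ i ≤ m-1. For t ∈ ℂ set p_t(z) = z^n + t·z^j. Suppose w_0(t), …, w_{m-1}(t) are functions analytic on a neighborhood of 0 in ℂ with w_i(0) = w_i and w_{i+1}(t) = p_t(w_i(t)) for all t (indices mod m). Then for every i, (d/dt)w_i(t)|_{t=0} = [ z_0^{n^i} · Σ_{s=0}^{m-1} n^{m-s-1} · (z_0^{-1})^{n^{s+i}(n-j)} ] / (1 - n^m). -/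
/-! Dividing by `wᵢ(0) = z₀^{nⁱ}` turns the differentiated recursion
`wᵢ₊₁' = n wᵢ^{n-1} wᵢ' + wᵢ^j` (at `t = 0`) into the affine recursion
`uᵢ₊₁ = n uᵢ + (z₀⁻¹)^{nⁱ(n-j)}` for `uᵢ = wᵢ'(0) / wᵢ(0)`. Unrolling it once around the orbit gives
`uᵢ = nᵐ uᵢ + Σ_{s<m} n^{m-s-1} (z₀⁻¹)^{n^{s+i}(n-j)}`, and `nᵐ ≠ 1` lets us solve for `uᵢ`. -/

open Filter Topology Finset

theorem deriv_zero_of_eventuallyEq_pow_add_mul_pow {𝕜 : Type*} [NontriviallyNormedField 𝕜]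
    {f g : 𝕜 → 𝕜} (n j : ℕ) (hf : DifferentiableAt 𝕜 f 0)
    (hg : g =ᶠ[𝓝 0] fun t => f t ^ n + t * f t ^ j) :
    deriv g 0 = n * f 0 ^ (n - 1) * deriv f 0 + f 0 ^ j := by
  have h : HasDerivAt (fun t => f t ^ n + t * f t ^ j)
      (n * f 0 ^ (n - 1) * deriv f 0 + (1 * f 0 ^ j + 0 * (j * f 0 ^ (j - 1) * deriv f 0))) 0 :=
    (hf.hasDerivAt.pow n).add ((hasDerivAt_id' 0).mul (hf.hasDerivAt.pow j))
  rw [hg.deriv_eq, h.deriv, one_mul, zero_mul, add_zero]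

theorem pow_mul_add_pow_div_pow {K : Type*} [Field K] {w : K} (hw : w ≠ 0) {n j : ℕ}
    (hn : 1 ≤ n) (hj : j ≤ n) (d : K) :
    (n * w ^ (n - 1) * d + w ^ j) / w ^ n = n * (d / w) + w⁻¹ ^ (n - j) := by
  have hw1 : w ^ n = w ^ (n - 1) * w := by rw [← pow_succ, Nat.sub_add_cancel hn]
  have hwj : w ^ n = w ^ j * w ^ (n - j) := by rw [← pow_add, Nat.add_sub_cancel' hj]
  rw [div_eq_iff (pow_ne_zero n hw), add_mul]
  congr 1
  · rw [hw1]
    field_simp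
  · rw [hwj, inv_pow, mul_comm (w ^ j), ← mul_assoc, inv_mul_cancel₀ (pow_ne_zero _ hw), one_mul]

theorem add_eq_pow_mul_add_sum_of_affine_recurrence {R : Type*} [CommSemiring R]
    {u c : ℕ → R} {a : R} (h : ∀ k, u (k + 1) = a * u k + c k) (i m : ℕ) :
    u (i + m) = a ^ m * u i + ∑ s ∈ range m, a ^ (m - s - 1) * c (s + i) := by
  induction m with
  | zero => simp
  | succ m ih =>
    have hsum : ∑ s ∈ range m, a ^ (m + 1 - s - 1) * c (s + i) =
        a * ∑ s ∈ range m, a ^ (m - s - 1) * c (s + i) := by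
      rw [mul_sum]
      refine sum_congr rfl fun s hs => ?_
      rw [show m + 1 - s - 1 = m - s - 1 + 1 by have := mem_range.mp hs; omega, pow_succ']
      ring
    rw [← add_assoc, h, ih, sum_range_succ, hsum, show m + 1 - m - 1 = 0 by omega, add_comm m i]
    ring

theorem eq_sum_div_of_affine_recurrence_of_periodic {K : Type*} [Field K]
    {u c : ℕ → K} {a : K} (h : ∀ k, u (k + 1) = a * u k + c k) {i m : ℕ}
    (hper : u (i + m) = u i) (ha : a ^ m ≠ 1) :
    u i = (∑ s ∈ range m, a ^ (m - s - 1) * c (s + i)) / (1 - a ^ m) := by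
  rw [eq_div_iff (sub_ne_zero.mpr ha.symm)]
  linear_combination add_eq_pow_mul_add_sum_of_affine_recurrence h i m - hper

theorem periodic_orbit_derivative_power_map_general (n : ℕ) (hn : 2 ≤ n)
    (j : ℕ) (hj : j ≤ n - 2) (m : ℕ) (hm : 0 < m)
    (z₀ : ℂ) (hz₀ : z₀ ≠ 0)
    (V : Set ℂ) (hV : IsOpen V) (h0V : (0 : ℂ) ∈ V)
    (W : ℕ → ℂ → ℂ)
    (hWanal : ∀ i, ∀ t ∈ V, AnalyticAt ℂ (W i) t)
    (hW0 : ∀ i, W i 0 = z₀ ^ n ^ i)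
    (hWper : ∀ i, ∀ t ∈ V, W (i + m) t = W i t)
    (hWstep : ∀ i, ∀ t ∈ V, W (i + 1) t = (W i t) ^ n + t * (W i t) ^ j) :
    ∀ i, deriv (W i) 0 =
      z₀ ^ n ^ i *
          (∑ s ∈ Finset.range m, (n : ℂ) ^ (m - s - 1) * (z₀⁻¹) ^ (n ^ (s + i) * (n - j))) /
        (1 - (n : ℂ) ^ m) := by
  intro i
  have hVnhds : V ∈ 𝓝 (0 : ℂ) := hV.mem_nhds h0V
  set u : ℕ → ℂ := fun k => deriv (W k) 0 / z₀ ^ n ^ k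
  have hrec : ∀ k, u (k + 1) = n * u k + z₀⁻¹ ^ (n ^ k * (n - j)) := fun k => by
    have hderiv := deriv_zero_of_eventuallyEq_pow_add_mul_pow n j
      (hWanal k 0 h0V).differentiableAt (eventuallyEq_of_mem hVnhds (hWstep k))
    rw [hW0] at hderiv
    simp only [u]
    rw [pow_succ, pow_mul, hderiv, pow_mul, inv_pow,
      pow_mul_add_pow_div_pow (pow_ne_zero _ hz₀) (by omega) (by omega)]
  have hper : u (i + m) = u i := by
    have hperiod0 := hWper i 0 h0V
    rw [hW0, hW0] at hperiod0
    simp only [u]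
    rw [hperiod0, (eventuallyEq_of_mem hVnhds (hWper i)).deriv_eq]
  have hnm : (n : ℂ) ^ m ≠ 1 := by exact_mod_cast (Nat.one_lt_pow hm.ne' (by omega)).ne'
  rw [mul_div_assoc, ← eq_sum_div_of_affine_recurrence_of_periodic hrec hper hnm,
    mul_div_cancel₀ _ (pow_ne_zero _ hz₀)]

/-- derivative at `t = 0` of the points `wᵢ(t)` of the periodic orbit
`wᵢ = z₀^{nⁱ}` of `p₀(z) = zⁿ` analytically continued through the family
`p_t(z) = zⁿ + t z^j`:
`wᵢ'(0) = z₀^{nⁱ} Σ_{s<m} n^{m-s-1} (z₀⁻¹)^{n^{s+i}(n-j)} / (1 - n^m)`. -/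
theorem periodic_orbit_derivative_power_map (n : ℕ) (hn : 2 ≤ n)
    (j : ℕ) (hj : j ≤ n - 2) (m : ℕ) (hm : 0 < m)
    (z₀ : ℂ) (hz₀ : z₀ ≠ 0)
    (hminper : Function.minimalPeriod (fun z : ℂ => z ^ n) z₀ = m)
    (V : Set ℂ) (hV : IsOpen V) (h0V : (0 : ℂ) ∈ V)
    (W : ℕ → ℂ → ℂ)
    (hWanal : ∀ i, ∀ t ∈ V, AnalyticAt ℂ (W i) t)
    (hW0 : ∀ i, W i 0 = z₀ ^ n ^ i)
    (hWper : ∀ i, ∀ t ∈ V, W (i + m) t = W i t)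
    (hWstep : ∀ i, ∀ t ∈ V, W (i + 1) t = (W i t) ^ n + t * (W i t) ^ j) :
    ∀ i, deriv (W i) 0 =
      z₀ ^ n ^ i *
          (∑ s ∈ Finset.range m, (n : ℂ) ^ (m - s - 1) * (z₀⁻¹) ^ (n ^ (s + i) * (n - j))) /
        (1 - (n : ℂ) ^ m) :=
  periodic_orbit_derivative_power_map_general n hn j hj m hm z₀ hz₀ V hV h0V W hWanal hW0 hWper
    hWstep
end

section
/- Let n ≥ 2 and let m be a positive integer. Then the set of complex numbers c for which the m-th iterate of the polynomial f_c(z) = z^n + c has a multiple fixed point — that is, the set { c ∈ ℂ : ∃ z ∈ ℂ, f_c^{∘m}(z) = z and (f_c^{∘m})'(z) = 1 } — is finite. -/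
/-!
A multiple fixed point of `f_c^[m]` is a double root of `P_c(z) = f_c^[m](z) - z`. Viewing `P`
as a polynomial in `z` over `ℂ[c]`, every such `c` is a root of the resultant of `P` and `∂P/∂z`.
This resultant is a nonzero polynomial in `c`, because at `c = 0` it specializes to the resultant
of the separable polynomial `z^(n^m) - z` and its derivative, with no drop in degree.
-/

open Polynomial

section Resultant

variable {R : Type*} [CommRing R]

theorem Polynomial.resultant_eq_zero_of_isRoot {f g : R[X]} {m n : ℕ} (hf : f.natDegree ≤ m)
    (hg : g.natDegree ≤ n) (hmn : m ≠ 0 ∨ n ≠ 0) {z : R} (hfz : f.IsRoot z)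
    (hgz : g.IsRoot z) :
    f.resultant g m n = 0 := by
  obtain ⟨p, q, -, -, h⟩ := exists_mul_add_mul_eq_C_resultant f g hf hg hmn
  simpa [hfz.eq_zero, hgz.eq_zero] using congrArg (eval z) h.symm

variable [IsDomain R] [CharZero R]

theorem finite_setOf_exists_isRoot_derivative_map {P : R[X][X]} (hP : P.natDegree ≠ 0) (c₀ : R)
    (hsep : (P.map (evalRingHom c₀)).Separable)
    (hdeg : (P.map (evalRingHom c₀)).natDegree = P.natDegree) :
    {c | ∃ z, (P.map (evalRingHom c)).IsRoot z ∧
      (derivative (P.map (evalRingHom c))).IsRoot z}.Finite := by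
  have hres : P.resultant (derivative P) P.natDegree (P.natDegree - 1) ≠ 0 := by
    intro h
    apply resultant_ne_zero _ _ hsep
    rw [natDegree_derivative, hdeg, derivative_map, resultant_map_map, h, map_zero]
  refine (finite_setOfPred_isRoot hres).subset ?_
  rintro c ⟨z, hz, hz'⟩
  rw [Set.mem_ofPred_eq, IsRoot.def, ← coe_evalRingHom, ← resultant_map_map, ← derivative_map]
  refine resultant_eq_zero_of_isRoot natDegree_map_le ?_ (Or.inl hP) hz hz'
  exact (natDegree_derivative_le _).trans (Nat.sub_le_sub_right natDegree_map_le 1)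

end Resultant

theorem Polynomial.separable_X_pow_succ_sub_X {K : Type*} [Field K] {k : ℕ} (hk : (k : K) ≠ 0) :
    (X ^ (k + 1) - X : K[X]).Separable := by
  have hcop : IsCoprime (X : K[X]) (X ^ k - 1) := by
    obtain ⟨j, rfl⟩ : ∃ j, k = j + 1 :=
      Nat.exists_eq_succ_of_ne_zero (by rintro rfl; simp at hk)
    exact ⟨X ^ j, -1, by ring⟩
  rw [show (X ^ (k + 1) - X : K[X]) = X * (X ^ k - 1) by ring]
  exact separable_X.mul (X_pow_sub_one_separable_iff.mpr hk) hcop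

section Unicritical

variable {R : Type*} [CommRing R]

-- The outer variable is `z`, the coefficient variable is `c`.
noncomputable def unicriticalIterate (n : ℕ) : ℕ → R[X][X]
  | 0 => X
  | m + 1 => unicriticalIterate n m ^ n + C X

theorem iterate_eq_eval_map_unicriticalIterate (n m : ℕ) (c : R) :
    (fun w : R => w ^ n + c)^[m] =
      fun z => ((unicriticalIterate n m).map (evalRingHom c)).eval z := by
  induction m with
  | zero => ext z; simp [unicriticalIterate]
  | succ m ih =>
    rw [Function.iterate_succ', ih]
    ext z
    simp [unicriticalIterate]

theorem unicriticalIterate_map_zero (n m : ℕ) :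
    (unicriticalIterate n m : R[X][X]).map (evalRingHom 0) = X ^ n ^ m := by
  induction m with
  | zero => simp [unicriticalIterate]
  | succ m ih => simp [unicriticalIterate, ih, ← pow_mul, pow_succ]

theorem natDegree_unicriticalIterate_le (n m : ℕ) :
    (unicriticalIterate n m : R[X][X]).natDegree ≤ n ^ m := by
  induction m with
  | zero => exact natDegree_X_le
  | succ m ih =>
    refine (natDegree_add_le _ _).trans (max_le ?_ ((natDegree_C _).trans_le (Nat.zero_le _)))
    calc (unicriticalIterate n m ^ n : R[X][X]).natDegree
        ≤ n * (unicriticalIterate n m : R[X][X]).natDegree := natDegree_pow_le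
      _ ≤ n ^ (m + 1) := by rw [pow_succ']; gcongr

end Unicritical

/-- the set of parameters `c` for which the `m`-th iterate of
`f_c(z) = zⁿ + c` has a multiple fixed point is finite. -/
theorem finite_parameters_with_multiple_fixed_point (n m : ℕ) (hn : 2 ≤ n) (hm : 0 < m) :
    {c : ℂ | ∃ z : ℂ, (fun w : ℂ => w ^ n + c)^[m] z = z ∧
      deriv ((fun w : ℂ => w ^ n + c)^[m]) z = 1}.Finite := by
  have hN : 1 < n ^ m := Nat.one_lt_pow hm.ne' (by omega)
  obtain ⟨k, hk⟩ : ∃ k, n ^ m = k + 2 := ⟨n ^ m - 2, by omega⟩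
  set P : ℂ[X][X] := unicriticalIterate n m - X
  have hP₀ : P.map (evalRingHom 0) = X ^ (k + 2) - X := by
    simp [P, unicriticalIterate_map_zero, hk]
  have hdeg₀ : (X ^ (k + 2) - X : ℂ[X]).natDegree = k + 2 := by
    rw [natDegree_sub_eq_left_of_natDegree_lt] <;> simp
  have hdeg : P.natDegree = k + 2 := by
    refine le_antisymm ?_ (hdeg₀ ▸ hP₀ ▸ natDegree_map_le)
    refine (natDegree_sub_le _ _).trans (max_le ?_ ?_)
    · exact hk ▸ natDegree_unicriticalIterate_le n m
    · exact natDegree_X_le.trans (by omega)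
  refine (finite_setOf_exists_isRoot_derivative_map (P := P) (by omega) 0
    (hP₀ ▸ separable_X_pow_succ_sub_X (by norm_cast)) (by rw [hP₀, hdeg₀, hdeg])).subset ?_
  rintro c ⟨z, hfix, hderiv⟩
  rw [iterate_eq_eval_map_unicriticalIterate] at hfix hderiv
  rw [Polynomial.deriv, derivative_map] at hderiv
  exact ⟨z, by simp [P, hfix], by simp [P, hderiv]⟩
end
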